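/- Under the stated setup and algorithmic hypotheses, the sequence (A^k, Z^k, H^k) has at least one limit point; that is, there exist matrices A* , Z* ∈ ℝ^{n×n}, H* ∈ ℝ^{k×n} and a strictly increasing sequence of indices k_j such that A^{k_j} → A*, Z^{k_j} → Z*, and H^{k_j} → H* as j → ∞, and moreover Z* ∈ S₁ and H* ∈ S₂. -/

import Mathlib

/-!
Each block update can only decrease `f`, so `f` along the iterates stays below its initial
value `B`. All terms of `f` are nonnegative, since Laplacians of symmetric nonnegative weights
are positive semidefinite, so `λ_Z ‖Zᵗ‖₁ ≤ B` and `(λ/2) ‖Aᵗ - Zᵗ‖² ≤ B`, while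
`‖Hᵗ‖² = Tr(Hᵗ Hᵗᵀ) = k`. The iterates therefore stay in a bounded subset of a finite-dimensional
space, and Bolzano–Weierstrass yields a convergent subsequence; its limit satisfies the closed
constraints `diag Z = 0` and `H Hᵀ = I`.
-/

open Matrix BigOperators Filter Topology

/-- Frobenius norm of a real matrix. -/
noncomputable def frob {m n : ℕ} (W : Matrix (Fin m) (Fin n) ℝ) : ℝ :=
  Real.sqrt (∑ i, ∑ j, (W i j) ^ 2)

/-- Laplacian `L_S = D_S - (|S| + |S|ᵀ)/2` of a square real matrix `S`. -/
noncomputable def lap {n : ℕ} (S : Matrix (Fin n) (Fin n) ℝ) : Matrix (Fin n) (Fin n) ℝ :=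
  Matrix.diagonal (fun i => ∑ j, (|S i j| + |S j i|) / 2)
    - (1 / 2 : ℝ) • (S.map (fun x => |x|) + (S.map (fun x => |x|))ᵀ)

/-- The objective `f(A, Z, H)` of the penalized DGSL model. -/
noncomputable def fObj {n k d : ℕ} (X : Matrix (Fin d) (Fin n) ℝ)
    (W M C : Matrix (Fin n) (Fin n) ℝ) (lam lamZ lamM a1 a2 : ℝ)
    (A Z : Matrix (Fin n) (Fin n) ℝ) (H : Matrix (Fin k) (Fin n) ℝ) : ℝ :=
  (1 / 2) * frob (X - X * A) ^ 2 + (lam / 2) * frob (A - Z) ^ 2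
    + lamZ * (∑ i, ∑ j, |Z i j|)
    + a1 * trace (H * lap Z * Hᵀ) / trace (H * lap C * Hᵀ)
    + a2 * trace (H * (lap W + lamM • lap M) * Hᵀ) / trace (H * lap C * Hᵀ)

attribute [local instance] Matrix.frobeniusNormedAddCommGroup Matrix.frobeniusNormedSpace

section Laplacian

variable {ι κ : Type*} [Fintype ι]

lemma posSemidef_diagonal_sum_sub [DecidableEq ι] {w : Matrix ι ι ℝ} (hw : wᵀ = w)
    (hw0 : ∀ i j, 0 ≤ w i j) : (diagonal (fun i => ∑ j, w i j) - w).PosSemidef := by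
  refine .of_dotProduct_mulVec_nonneg ?_ fun x => ?_
  · simp [IsHermitian, conjTranspose_eq_transpose_of_trivial, hw]
  have hquad : star x ⬝ᵥ ((diagonal (fun i => ∑ j, w i j) - w) *ᵥ x)
      = ∑ i, ∑ j, w i j * x i * (x i - x j) := by
    rw [sub_mulVec, dotProduct_sub, star_trivial]
    simp only [dotProduct, mulVec_diagonal]
    simp only [mulVec, dotProduct, Finset.sum_mul, Finset.mul_sum, ← Finset.sum_sub_distrib]
    exact Finset.sum_congr rfl fun i _ => Finset.sum_congr rfl fun j _ => by ring
  -- symmetrising the right-hand side of `hquad` gives `∑ᵢⱼ wᵢⱼ (xᵢ - xⱼ)² / 2`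
  have hswap : ∑ i, ∑ j, w i j * x j * (x j - x i) = ∑ i, ∑ j, w i j * x i * (x i - x j) := by
    rw [Finset.sum_comm]
    exact Finset.sum_congr rfl fun i _ => Finset.sum_congr rfl fun j _ => by
      rw [← congrFun₂ hw i j, transpose_apply]
  have hsq : ∑ i, ∑ j, w i j * (x i - x j) ^ 2
      = ∑ i, ∑ j, w i j * x i * (x i - x j) + ∑ i, ∑ j, w i j * x j * (x j - x i) := by
    simp only [← Finset.sum_add_distrib]
    exact Finset.sum_congr rfl fun i _ => Finset.sum_congr rfl fun j _ => by ring
  have hnonneg : 0 ≤ ∑ i, ∑ j, w i j * (x i - x j) ^ 2 :=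
    Finset.sum_nonneg fun i _ => Finset.sum_nonneg fun j _ => mul_nonneg (hw0 i j) (sq_nonneg _)
  linarith

lemma trace_mul_mul_transpose_nonneg [Fintype κ] {P : Matrix ι ι ℝ} (hP : P.PosSemidef)
    (H : Matrix κ ι ℝ) : 0 ≤ trace (H * P * Hᵀ) := by
  simpa [conjTranspose_eq_transpose_of_trivial] using (hP.mul_mul_conjTranspose_same H).trace_nonneg

end Laplacian

lemma lap_posSemidef {n : ℕ} (S : Matrix (Fin n) (Fin n) ℝ) : (lap S).PosSemidef := by
  set w := (1 / 2 : ℝ) • (S.map (fun x => |x|) + (S.map (fun x => |x|))ᵀ) with hw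
  have hw_apply : ∀ i j, w i j = (|S i j| + |S j i|) / 2 := fun i j => by
    simp only [hw, Matrix.smul_apply, Matrix.add_apply, map_apply, transpose_apply, smul_eq_mul]
    ring
  have hlap : lap S = diagonal (fun i => ∑ j, w i j) - w := by
    simp only [lap, hw_apply]
    rfl
  rw [hlap]
  exact posSemidef_diagonal_sum_sub (by ext i j; simp only [transpose_apply, hw_apply, add_comm])
    (fun i j => by rw [hw_apply]; positivity)

section Frobenius

variable {m n : ℕ}

lemma frob_eq_norm (W : Matrix (Fin m) (Fin n) ℝ) : frob W = ‖W‖ := by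
  simp [frob, frobenius_norm_def, Real.sqrt_eq_rpow]

lemma norm_sq_eq_trace_mul_transpose (H : Matrix (Fin m) (Fin n) ℝ) :
    ‖H‖ ^ 2 = trace (H * Hᵀ) := by
  rw [← frob_eq_norm, frob, Real.sq_sqrt (by positivity)]
  simp [trace, mul_apply, sq]

lemma norm_le_sum_abs (Z : Matrix (Fin m) (Fin n) ℝ) : ‖Z‖ ≤ ∑ i, ∑ j, |Z i j| := by
  rw [← frob_eq_norm, frob, Real.sqrt_le_left (by positivity)]
  calc ∑ i, ∑ j, Z i j ^ 2 = ∑ i, ∑ j, |Z i j| ^ 2 := by simp only [sq_abs]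
    _ ≤ ∑ i, (∑ j, |Z i j|) ^ 2 := by
      gcongr with i; exact Finset.sum_sq_le_sq_sum_of_nonneg fun j _ => abs_nonneg _
    _ ≤ (∑ i, ∑ j, |Z i j|) ^ 2 := Finset.sum_sq_le_sq_sum_of_nonneg fun i _ => by positivity

lemma tendsto_frob_sub_zero {α : Type*} {l : Filter α} {u : α → Matrix (Fin m) (Fin n) ℝ}
    {L : Matrix (Fin m) (Fin n) ℝ} (h : Tendsto u l (𝓝 L)) :
    Tendsto (fun j => frob (u j - L)) l (𝓝 0) := by
  simpa only [frob_eq_norm] using tendsto_iff_norm_sub_tendsto_zero.1 h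

end Frobenius

lemma norm_eq_sqrt_of_mul_transpose_eq_one {k n : ℕ} {H : Matrix (Fin k) (Fin n) ℝ}
    (hH : H * Hᵀ = 1) : ‖H‖ = √k := by
  rw [← Real.sqrt_sq (norm_nonneg H), norm_sq_eq_trace_mul_transpose, hH, trace_one,
    Fintype.card_fin]

lemma exists_strictMono_tendsto_of_norm_le {E : Type*} [NormedAddCommGroup E] [ProperSpace E]
    {x : ℕ → E} {R : ℝ} (hx : ∀ t, ‖x t‖ ≤ R) :
    ∃ a, ∃ φ : ℕ → ℕ, StrictMono φ ∧ Tendsto (x ∘ φ) atTop (𝓝 a) := by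
  obtain ⟨a, -, φ, hφ, hlim⟩ :=
    tendsto_subseq_of_bounded (Metric.isBounded_closedBall (x := 0) (r := R))
      fun t => mem_closedBall_zero_iff.2 (hx t)
  exact ⟨a, φ, hφ, hlim⟩

section Objective

variable {n k d : ℕ} (X : Matrix (Fin d) (Fin n) ℝ) (W M C : Matrix (Fin n) (Fin n) ℝ)
  {lam lamZ lamM a1 a2 : ℝ}

lemma coupling_add_sparsity_le_fObj (hlamM : 0 ≤ lamM) (ha1 : 0 ≤ a1) (ha2 : 0 ≤ a2)
    (A Z : Matrix (Fin n) (Fin n) ℝ) (H : Matrix (Fin k) (Fin n) ℝ) :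
    lam / 2 * ‖A - Z‖ ^ 2 + lamZ * ∑ i, ∑ j, |Z i j|
      ≤ fObj X W M C lam lamZ lamM a1 a2 A Z H := by
  have hC := trace_mul_mul_transpose_nonneg (lap_posSemidef C) H
  have hZ := trace_mul_mul_transpose_nonneg (lap_posSemidef Z) H
  have hWM := trace_mul_mul_transpose_nonneg
    ((lap_posSemidef W).add ((lap_posSemidef M).smul hlamM)) H
  have h1 : 0 ≤ 1 / 2 * frob (X - X * A) ^ 2 := by positivity
  have h4 := div_nonneg (mul_nonneg ha1 hZ) hC
  have h5 := div_nonneg (mul_nonneg ha2 hWM) hC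
  rw [fObj, frob_eq_norm (A - Z)]
  linarith

end Objective

lemma norm_le_of_coupling_add_sparsity_le {m n : ℕ} {lam lamZ B : ℝ} (hlam : 0 < lam)
    (hlamZ : 0 < lamZ) {A Z : Matrix (Fin m) (Fin n) ℝ}
    (h : lam / 2 * ‖A - Z‖ ^ 2 + lamZ * ∑ i, ∑ j, |Z i j| ≤ B) :
    ‖Z‖ ≤ B / lamZ ∧ ‖A‖ ≤ √(2 * B / lam) + B / lamZ := by
  have hcoupling : 0 ≤ lam / 2 * ‖A - Z‖ ^ 2 := by positivity
  have hsparsity : 0 ≤ lamZ * ∑ i, ∑ j, |Z i j| := by positivity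
  have hZ : ‖Z‖ ≤ B / lamZ := by
    rw [le_div_iff₀ hlamZ]
    nlinarith [norm_le_sum_abs Z]
  have hAZ : ‖A - Z‖ ≤ √(2 * B / lam) := by
    apply Real.le_sqrt_of_sq_le
    rw [le_div_iff₀ hlam]
    linarith
  refine ⟨hZ, ?_⟩
  calc ‖A‖ = ‖(A - Z) + Z‖ := by rw [sub_add_cancel]
    _ ≤ ‖A - Z‖ + ‖Z‖ := norm_add_le _ _
    _ ≤ √(2 * B / lam) + B / lamZ := add_le_add hAZ hZ

theorem dgsl_limit_point_exists_general (n k d : ℕ)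
    (X : Matrix (Fin d) (Fin n) ℝ) (W M C : Matrix (Fin n) (Fin n) ℝ)
    (lam lamZ lamM a1 a2 : ℝ) (hlam : 0 < lam) (hlamZ : 0 < lamZ)
    (hlamM : 0 < lamM) (ha1 : 0 < a1) (ha2 : 0 < a2)
    (Aseq Zseq : ℕ → Matrix (Fin n) (Fin n) ℝ)
    (Hseq : ℕ → Matrix (Fin k) (Fin n) ℝ)
    (hZ0 : ∀ i, Zseq 0 i i = 0) (hH0 : Hseq 0 * (Hseq 0)ᵀ = 1)
    (hHstep : ∀ t : ℕ, Hseq (t + 1) * (Hseq (t + 1))ᵀ = 1 ∧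
      ∀ H : Matrix (Fin k) (Fin n) ℝ, H * Hᵀ = 1 →
        fObj X W M C lam lamZ lamM a1 a2 (Aseq t) (Zseq t) (Hseq (t + 1))
          ≤ fObj X W M C lam lamZ lamM a1 a2 (Aseq t) (Zseq t) H)
    (hAstep : ∀ (t : ℕ) (A : Matrix (Fin n) (Fin n) ℝ),
      fObj X W M C lam lamZ lamM a1 a2 (Aseq (t + 1)) (Zseq t) (Hseq (t + 1))
        ≤ fObj X W M C lam lamZ lamM a1 a2 A (Zseq t) (Hseq (t + 1)))
    (hZstep : ∀ t : ℕ, (∀ i, Zseq (t + 1) i i = 0) ∧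
      ∀ Z : Matrix (Fin n) (Fin n) ℝ, (∀ i, Z i i = 0) →
        fObj X W M C lam lamZ lamM a1 a2 (Aseq (t + 1)) (Zseq (t + 1)) (Hseq (t + 1))
          ≤ fObj X W M C lam lamZ lamM a1 a2 (Aseq (t + 1)) Z (Hseq (t + 1))) :
    ∃ (Astar Zstar : Matrix (Fin n) (Fin n) ℝ) (Hstar : Matrix (Fin k) (Fin n) ℝ)
      (φ : ℕ → ℕ), StrictMono φ ∧
      Tendsto (fun j : ℕ => frob (Aseq (φ j) - Astar)) atTop (𝓝 0) ∧
      Tendsto (fun j : ℕ => frob (Zseq (φ j) - Zstar)) atTop (𝓝 0) ∧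
      Tendsto (fun j : ℕ => frob (Hseq (φ j) - Hstar)) atTop (𝓝 0) ∧
      (∀ i, Zstar i i = 0) ∧ Hstar * Hstarᵀ = 1 := by
  set f := fObj X W M C lam lamZ lamM a1 a2
  have hZfeas : ∀ t i, Zseq t i i = 0 := fun | 0 => hZ0 | t + 1 => (hZstep t).1
  have hHfeas : ∀ t, Hseq t * (Hseq t)ᵀ = 1 := fun | 0 => hH0 | t + 1 => (hHstep t).1
  have hdescent : Antitone fun t => f (Aseq t) (Zseq t) (Hseq t) :=
    antitone_nat_of_succ_le fun t => calc
      _ ≤ f (Aseq (t + 1)) (Zseq t) (Hseq (t + 1)) := (hZstep t).2 _ (hZfeas t)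
      _ ≤ f (Aseq t) (Zseq t) (Hseq (t + 1)) := hAstep t _
      _ ≤ _ := (hHstep t).2 _ (hHfeas t)
  set B := f (Aseq 0) (Zseq 0) (Hseq 0)
  have hAZ : ∀ t, ‖Zseq t‖ ≤ B / lamZ ∧ ‖Aseq t‖ ≤ √(2 * B / lam) + B / lamZ := fun t =>
    norm_le_of_coupling_add_sparsity_le hlam hlamZ <|
      (coupling_add_sparsity_le_fObj X W M C hlamM.le ha1.le ha2.le _ _ _).trans
        (hdescent (Nat.zero_le t))
  obtain ⟨⟨Astar, Zstar, Hstar⟩, φ, hφ, hlim⟩ :=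
    exists_strictMono_tendsto_of_norm_le (x := fun t => (Aseq t, Zseq t, Hseq t))
      (R := max (√(2 * B / lam) + B / lamZ) (max (B / lamZ) √k)) fun t =>
      norm_prod_le_iff.2 ⟨le_max_of_le_left (hAZ t).2, norm_prod_le_iff.2
        ⟨le_max_of_le_right (le_max_of_le_left (hAZ t).1),
          le_max_of_le_right (le_max_of_le_right
            (norm_eq_sqrt_of_mul_transpose_eq_one (hHfeas t)).le)⟩⟩
  have hZlim := hlim.snd_nhds.fst_nhds
  have hHlim := hlim.snd_nhds.snd_nhds
  refine ⟨Astar, Zstar, Hstar, φ, hφ, tendsto_frob_sub_zero hlim.fst_nhds,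
    tendsto_frob_sub_zero hZlim, tendsto_frob_sub_zero hHlim, fun i => ?_, ?_⟩
  · exact (isClosed_eq (continuous_id.matrix_elem i i) continuous_const).mem_of_tendsto hZlim
      (.of_forall fun j => hZfeas (φ j) i)
  · exact (isClosed_eq (continuous_id.matrix_mul continuous_id.matrix_transpose)
      continuous_const).mem_of_tendsto hHlim (.of_forall fun j => hHfeas (φ j))

theorem dgsl_limit_point_exists (n k d : ℕ) (hn : 0 < n) (hk : 0 < k) (hd : 0 < d)
    (X : Matrix (Fin d) (Fin n) ℝ) (W M C : Matrix (Fin n) (Fin n) ℝ)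
    (lam lamZ lamM a1 a2 : ℝ) (hlam : 0 < lam) (hlamZ : 0 < lamZ)
    (hlamM : 0 < lamM) (ha1 : 0 < a1) (ha2 : 0 < a2)
    (hC : ∀ H : Matrix (Fin k) (Fin n) ℝ, H * Hᵀ = 1 → 0 < trace (H * lap C * Hᵀ))
    (Aseq Zseq : ℕ → Matrix (Fin n) (Fin n) ℝ)
    (Hseq : ℕ → Matrix (Fin k) (Fin n) ℝ)
    (hZ0 : ∀ i, Zseq 0 i i = 0) (hH0 : Hseq 0 * (Hseq 0)ᵀ = 1)
    (hHstep : ∀ t : ℕ, Hseq (t + 1) * (Hseq (t + 1))ᵀ = 1 ∧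
      ∀ H : Matrix (Fin k) (Fin n) ℝ, H * Hᵀ = 1 →
        fObj X W M C lam lamZ lamM a1 a2 (Aseq t) (Zseq t) (Hseq (t + 1))
          ≤ fObj X W M C lam lamZ lamM a1 a2 (Aseq t) (Zseq t) H)
    (hAstep : ∀ (t : ℕ) (A : Matrix (Fin n) (Fin n) ℝ),
      fObj X W M C lam lamZ lamM a1 a2 (Aseq (t + 1)) (Zseq t) (Hseq (t + 1))
        ≤ fObj X W M C lam lamZ lamM a1 a2 A (Zseq t) (Hseq (t + 1)))
    (hZstep : ∀ t : ℕ, (∀ i, Zseq (t + 1) i i = 0) ∧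
      ∀ Z : Matrix (Fin n) (Fin n) ℝ, (∀ i, Z i i = 0) →
        fObj X W M C lam lamZ lamM a1 a2 (Aseq (t + 1)) (Zseq (t + 1)) (Hseq (t + 1))
          ≤ fObj X W M C lam lamZ lamM a1 a2 (Aseq (t + 1)) Z (Hseq (t + 1))) :
    ∃ (Astar Zstar : Matrix (Fin n) (Fin n) ℝ) (Hstar : Matrix (Fin k) (Fin n) ℝ)
      (φ : ℕ → ℕ), StrictMono φ ∧
      Tendsto (fun j : ℕ => frob (Aseq (φ j) - Astar)) atTop (𝓝 0) ∧
      Tendsto (fun j : ℕ => frob (Zseq (φ j) - Zstar)) atTop (𝓝 0) ∧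
      Tendsto (fun j : ℕ => frob (Hseq (φ j) - Hstar)) atTop (𝓝 0) ∧
      (∀ i, Zstar i i = 0) ∧ Hstar * Hstarᵀ = 1 :=
  dgsl_limit_point_exists_general n k d X W M C lam lamZ lamM a1 a2 hlam hlamZ hlamM ha1 ha2 Aseq
    Zseq Hseq hZ0 hH0 hHstep hAstep hZstep
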